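/- arXiv:2510.10431 — 3 statements merged into one kernel-verified Lean document; each statement's English description precedes it below -/
import Mathlib

section
/- Let $h$ be a uniformly random function from a finite set $X$ (with $|X| \geq 1$) to $[M]$, and let $y \in X$. If $M \geq 2|X|^2/\delta$ for some $\delta \in (0,1)$, then the probability that $h(y) < h(x)$ for all $x \in X \setminus \{y\}$ lies in the interval $[(1-\delta)/|X|, (1+\delta)/|X|]$. -/
open Finset

private lemma card_Aset_eq {X : Type*} [Fintype X] [DecidableEq X] (M : ℕ) (x y : X) :
    (univ.filter fun h : X → Fin M => ∀ z, z ≠ x → h x < h z).card =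
    (univ.filter fun h : X → Fin M => ∀ z, z ≠ y → h y < h z).card := by
  apply Finset.card_bij' (fun h _ => h ∘ Equiv.swap x y) (fun h _ => h ∘ Equiv.swap x y)
  · intro h hh
    simp only [mem_filter, mem_univ, true_and] at hh ⊢
    intro z hz
    have h1 : (h ∘ Equiv.swap x y) y = h x := by simp [Equiv.swap_apply_right]
    have h2 : Equiv.swap x y z ≠ x := by
      intro e
      apply hz
      have := congrArg (Equiv.swap x y) e
      simpa [Equiv.swap_apply_self, Equiv.swap_apply_left] using this
    rw [h1]
    exact hh _ h2
  · intro h hh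
    simp only [mem_filter, mem_univ, true_and] at hh ⊢
    intro z hz
    have h1 : (h ∘ Equiv.swap x y) x = h y := by simp [Equiv.swap_apply_left]
    have h2 : Equiv.swap x y z ≠ y := by
      intro e
      apply hz
      have := congrArg (Equiv.swap x y) e
      simpa [Equiv.swap_apply_self, Equiv.swap_apply_right] using this
    rw [h1]
    exact hh _ h2
  · intro h _; funext z; simp [Equiv.swap_apply_self]
  · intro h _; funext z; simp [Equiv.swap_apply_self]

/-- A uniformly random function `h : X → [M]` with `M ≥ 2|X|²/δ` is a min-wise hash
with multiplicative error `δ`: the probability that a fixed `y` attains the unique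
strict minimum lies in `[(1-δ)/|X|, (1+δ)/|X|]`. -/
theorem stmt0 {X : Type*} [Fintype X] [DecidableEq X] (y : X) (M : ℕ) (δ : ℝ)
    (hδ0 : 0 < δ) (hδ1 : δ < 1) (hX : 1 ≤ Fintype.card X)
    (hM : 2 * (Fintype.card X : ℝ) ^ 2 / δ ≤ (M : ℝ)) :
    (1 - δ) / (Fintype.card X : ℝ) ≤
      ((univ.filter fun h : X → Fin M => ∀ x, x ≠ y → h y < h x).card : ℝ) /
        (Fintype.card (X → Fin M) : ℝ) ∧
    ((univ.filter fun h : X → Fin M => ∀ x, x ≠ y → h y < h x).card : ℝ) /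
        (Fintype.card (X → Fin M) : ℝ) ≤ (1 + δ) / (Fintype.card X : ℝ) := by
  classical
  set n := Fintype.card X with hn
  have hn1 : (1 : ℝ) ≤ (n : ℝ) := by exact_mod_cast hX
  have hnpos : (0 : ℝ) < n := by linarith
  -- M is large
  have hnM : (n : ℝ) ≤ (M : ℝ) := by
    have h1 : 2 * (n : ℝ) ^ 2 / δ ≥ 2 * (n : ℝ) ^ 2 := by
      rw [ge_iff_le, le_div_iff₀ hδ0]
      nlinarith
    nlinarith
  have hMpos : (0 : ℝ) < (M : ℝ) := by linarith
  have hMnat : 0 < M := by exact_mod_cast hMpos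
  -- the events
  set A : X → Finset (X → Fin M) := fun x => univ.filter fun h => ∀ z, z ≠ x → h x < h z
    with hA
  have hcardeq : ∀ x : X, (A x).card = (A y).card := fun x => card_Aset_eq M x y
  -- disjointness
  have hdisj : ∀ a ∈ (univ : Finset X), ∀ b ∈ (univ : Finset X), a ≠ b →
      Disjoint (A a) (A b) := by
    intro a _ b _ hab
    rw [Finset.disjoint_left]
    intro h hha hhb
    simp only [hA, mem_filter, mem_univ, true_and] at hha hhb
    exact absurd (lt_trans (hha b hab.symm) (hhb a hab)) (lt_irrefl _)
  have hsum : (univ.biUnion A).card = ∑ x : X, (A x).card := Finset.card_biUnion hdisj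
  have hsum' : ∑ x : X, (A x).card = n * (A y).card := by
    rw [Finset.sum_congr rfl (fun x _ => hcardeq x), Finset.sum_const, card_univ]
    rfl
  -- total count
  have hfun : Fintype.card (X → Fin M) = M ^ n := by
    rw [Fintype.card_fun, Fintype.card_fin]
  -- upper bound on n * card
  have hupper : n * (A y).card ≤ M ^ n := by
    rw [← hsum', ← hsum, ← hfun]
    exact Finset.card_le_univ _
  -- injective functions are in the union
  have hne : Nonempty X := Fintype.card_pos_iff.mp (by omega)
  have hinjsub : (univ.filter fun h : X → Fin M => Function.Injective h) ⊆
      univ.biUnion A := by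
    intro h hh
    simp only [mem_filter, mem_univ, true_and] at hh
    obtain ⟨x, -, hx⟩ := Finset.exists_min_image univ h univ_nonempty
    simp only [mem_biUnion]
    refine ⟨x, mem_univ x, ?_⟩
    simp only [hA, mem_filter, mem_univ, true_and]
    intro z hz
    exact lt_of_le_of_ne (hx z (mem_univ z)) (fun e => hz (hh e).symm)
  have hcInj : (univ.filter fun h : X → Fin M => Function.Injective h).card =
      M.descFactorial n := by
    rw [← Fintype.card_subtype,
      Fintype.card_congr (Equiv.subtypeInjectiveEquivEmbedding X (Fin M)),
      Fintype.card_embedding_eq, Fintype.card_fin]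
  have hlowerN : M.descFactorial n ≤ n * (A y).card := by
    rw [← hsum', ← hsum, ← hcInj]
    exact Finset.card_le_card hinjsub
  -- real versions
  have hdesc : ((M + 1 - n) : ℕ) ^ n ≤ M.descFactorial n := Nat.pow_sub_le_descFactorial M n
  have hnM' : n ≤ M := by exact_mod_cast hnM
  have hcast : ((M : ℝ) - n) ^ n ≤ (M.descFactorial n : ℝ) := by
    calc ((M : ℝ) - n) ^ n ≤ (((M + 1 - n : ℕ) : ℝ)) ^ n := by
          apply pow_le_pow_left₀ (by linarith)
          rw [Nat.cast_sub (by omega)]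
          push_cast; linarith
      _ ≤ (M.descFactorial n : ℝ) := by exact_mod_cast hdesc
  -- Bernoulli
  have hbern : (M : ℝ) ^ n * (1 - (n : ℝ) ^ 2 / M) ≤ ((M : ℝ) - n) ^ n := by
    have ha : (-2 : ℝ) ≤ -((n : ℝ) / M) := by
      rw [neg_le_neg_iff, div_le_iff₀ hMpos]; linarith
    have hb := one_add_mul_le_pow ha n
    have hrw : (1 + -((n : ℝ) / M)) = (1 - (n : ℝ) / M) := by ring
    rw [hrw] at hb
    have hMn : ((M : ℝ) - n) = M * (1 - (n : ℝ) / M) := by field_simp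
    rw [hMn, mul_pow]
    have h1 : 1 - (n : ℝ) ^ 2 / M ≤ (1 - (n : ℝ) / M) ^ n := by
      calc 1 - (n : ℝ) ^ 2 / M = 1 + (n : ℝ) * -((n : ℝ) / M) := by ring
        _ ≤ _ := hb
    have hMn0 : (0 : ℝ) ≤ (M : ℝ) ^ n := by positivity
    nlinarith [pow_pos hMpos n]
  have hδM : (n : ℝ) ^ 2 / M ≤ δ / 2 := by
    rw [div_le_div_iff₀ hMpos (by norm_num : (0:ℝ) < 2)]
    have := (div_le_iff₀ hδ0).mp hM
    nlinarith
  -- put it together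
  have hMpow : (0 : ℝ) < (M : ℝ) ^ n := pow_pos hMpos n
  have hlowerR : (M : ℝ) ^ n * (1 - δ) ≤ (n : ℝ) * ((A y).card : ℝ) := by
    have h1 : (M.descFactorial n : ℝ) ≤ (n : ℝ) * ((A y).card : ℝ) := by
      exact_mod_cast hlowerN
    nlinarith
  have hupperR : (n : ℝ) * ((A y).card : ℝ) ≤ (M : ℝ) ^ n := by exact_mod_cast hupper
  rw [hfun]
  have hAy : ((univ.filter fun h : X → Fin M => ∀ x, x ≠ y → h y < h x).card : ℝ)
      = ((A y).card : ℝ) := rfl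
  push_cast
  rw [hAy]
  constructor
  · rw [div_le_div_iff₀ hnpos hMpow]
    calc (1 - δ) * (M : ℝ) ^ n = (M : ℝ) ^ n * (1 - δ) := mul_comm _ _
      _ ≤ (n : ℝ) * ((A y).card : ℝ) := hlowerR
      _ = ((A y).card : ℝ) * n := mul_comm _ _
  · rw [div_le_div_iff₀ hMpow hnpos]
    calc ((A y).card : ℝ) * n = (n : ℝ) * ((A y).card : ℝ) := mul_comm _ _
      _ ≤ (M : ℝ) ^ n := hupperR
      _ ≤ (1 + δ) * (M : ℝ) ^ n := by nlinarith
end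

section
/- Let $X_1, \ldots, X_b$ be $t$-wise independent random variables, each uniform on $[M]$, where $t \leq b$. Then for any threshold $\theta \in [M]$, $\left| \Pr[\min_i X_i > \theta] - (1 - \theta/M)^b \right| \leq \frac{(b \theta / M)^t}{t!}$. -/
open Finset


lemma altsum (n m : ℕ) : ∑ k ∈ Finset.range (m+1), (-1:ℝ)^k * ((n+1).choose k) = (-1)^m * (n.choose m) := by
  induction m with
  | zero => simp
  | succ m ih =>
    rw [Finset.sum_range_succ, ih, Nat.choose_succ_succ]
    push_cast
    ring

lemma pointwise (n t : ℕ) :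
    ∃ e : ℝ, 0 ≤ e ∧ e ≤ (n.choose t : ℝ) ∧
      (if n = 0 then (1:ℝ) else 0) - ∑ k ∈ Finset.range t, (-1:ℝ)^k * (n.choose k)
        = (-1)^t * e := by
  match t, n with
  | 0, 0 => exact ⟨1, by norm_num⟩
  | 0, n+1 => exact ⟨0, by norm_num⟩
  | s+1, 0 =>
    refine ⟨0, le_refl _, by positivity, ?_⟩
    rw [Finset.sum_range_succ']
    simp [Nat.choose_eq_zero_of_lt]
  | s+1, m+1 =>
    refine ⟨(m.choose s : ℝ), by positivity, ?_, ?_⟩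
    · have : m.choose s ≤ (m+1).choose (s+1) := by
        rw [Nat.choose_succ_succ]; exact Nat.le_add_right _ _
      exact_mod_cast this
    · rw [altsum]
      simp [pow_succ]

lemma card_filter_lt (M θ : ℕ) (hθM : θ ≤ M) :
    ((univ : Finset (Fin M)).filter (fun x : Fin M => (x:ℕ) < θ)).card = θ := by
  have h1 : (univ : Finset (Fin M)).filter (fun x : Fin M => (x:ℕ) < θ) =
      (univ : Finset (Fin θ)).map (Fin.castLEEmb hθM) := by
    ext x
    simp only [mem_filter, mem_univ, true_and, mem_map, Fin.castLEEmb_apply]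
    constructor
    · intro hx; exact ⟨⟨x.1, hx⟩, rfl⟩
    · rintro ⟨y, rfl⟩; exact y.2
  rw [h1, card_map, card_univ, Fintype.card_fin]

lemma pow_helper (x : ℝ) (hx : x ≠ 0) (k b : ℕ) (hk : k ≤ b) :
    x^(b-k) * (1/x)^b = (1/x)^k := by
  have h : (1/x)^b = (1/x)^(b-k) * (1/x)^k := by rw [← pow_add, Nat.sub_add_cancel hk]
  rw [h, ← mul_assoc, ← mul_pow, mul_one_div_cancel hx, one_pow, one_mul]

lemma key {Ω : Type*} [Fintype Ω] (μ : Ω → ℝ) (hμ0 : ∀ ω, 0 ≤ μ ω)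
    (b t M : ℕ) (hM : 1 ≤ M)
    (Xv : Fin b → Ω → Fin M)
    (hind : ∀ S : Finset (Fin b), S.card ≤ t → ∀ v : Fin b → Fin M,
      ∑ ω ∈ univ.filter (fun ω => ∀ i ∈ S, Xv i ω = v i), μ ω = (1 / (M : ℝ)) ^ S.card)
    (θ : ℕ) (hθM : θ ≤ M) :
    ∃ c : ℝ, 0 ≤ c ∧ c ≤ (b.choose t : ℝ) * ((θ:ℝ)/M)^t ∧
      (∑ ω ∈ univ.filter (fun ω => ∀ i, θ ≤ (Xv i ω : ℕ)), μ ω)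
        = (∑ k ∈ Finset.range t, (-1:ℝ)^k * (b.choose k) * ((θ:ℝ)/M)^k) + (-1)^t * c := by
  have hMne : (M:ℝ) ≠ 0 := by positivity
  set N : Ω → ℕ := fun ω => (univ.filter fun i => ((Xv i ω : ℕ) < θ)).card with hN
  -- single-event probability
  have hfθ : (univ.filter (fun x : Fin M => (x:ℕ) < θ)).card = θ := card_filter_lt M θ hθM
  have hS : ∀ S : Finset (Fin b), S.card ≤ t →
      ∑ ω, (if ∀ i ∈ S, ((Xv i ω:ℕ) < θ) then μ ω else 0) = ((θ:ℝ)/M)^S.card := by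
    intro S hSt
    set V := Fintype.piFinset (fun i : Fin b => if i ∈ S then
      univ.filter (fun x : Fin M => (x:ℕ) < θ) else {(⟨0, hM⟩ : Fin M)}) with hV
    have hVcard : V.card = θ ^ S.card := by
      rw [hV, Fintype.card_piFinset]
      have : ∀ i : Fin b, ((if i ∈ S then univ.filter (fun x : Fin M => (x:ℕ) < θ)
          else {(⟨0, hM⟩ : Fin M)}).card) = if i ∈ S then θ else 1 := by
        intro i; split <;> simp [hfθ]
      rw [Finset.prod_congr rfl (fun i _ => this i), Finset.prod_ite_mem, univ_inter,
        Finset.prod_const]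
    have hfil : ∀ ω, V.filter (fun v => ∀ i ∈ S, Xv i ω = v i) =
        if (∀ i ∈ S, ((Xv i ω:ℕ) < θ)) then
          {fun i => if i ∈ S then Xv i ω else (⟨0, hM⟩ : Fin M)} else ∅ := by
      intro ω
      split
      next h =>
        ext v
        simp only [mem_filter, hV, Fintype.mem_piFinset, mem_singleton]
        constructor
        · rintro ⟨h1, h2⟩
          funext i
          by_cases hi : i ∈ S
          · rw [if_pos hi]; exact (h2 i hi).symm
          · have := h1 i; rw [if_neg hi, mem_singleton] at this; rw [if_neg hi]; exact this
        · rintro rfl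
          constructor
          · intro i
            by_cases hi : i ∈ S <;> simp [hi]
            exact h i hi
          · intro i hi; simp [hi]
      next h =>
        rw [filter_eq_empty_iff]
        push_neg at h
        obtain ⟨i, hi, hge⟩ := h
        intro v hv hall
        have h1 : v i ∈ univ.filter (fun x : Fin M => (x:ℕ) < θ) := by
          have := (Fintype.mem_piFinset.mp hv) i
          rwa [if_pos hi] at this
        rw [mem_filter] at h1
        have h2 : ((Xv i ω : ℕ) < θ) := by rw [hall i hi]; exact h1.2
        omega
    calc ∑ ω, (if ∀ i ∈ S, ((Xv i ω:ℕ) < θ) then μ ω else 0)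
        = ∑ ω, ((V.filter (fun v => ∀ i ∈ S, Xv i ω = v i)).card : ℝ) * μ ω := by
          refine Finset.sum_congr rfl fun ω _ => ?_
          rw [hfil ω]
          split <;> simp
      _ = ∑ ω, ∑ v ∈ V, (if ∀ i ∈ S, Xv i ω = v i then μ ω else 0) := by
          refine Finset.sum_congr rfl fun ω _ => ?_
          rw [← Finset.sum_filter, Finset.sum_const, nsmul_eq_mul]
      _ = ∑ v ∈ V, ∑ ω, (if ∀ i ∈ S, Xv i ω = v i then μ ω else 0) := Finset.sum_comm
      _ = ∑ v ∈ V, (1/(M:ℝ))^S.card := by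
          refine Finset.sum_congr rfl fun v _ => ?_
          rw [← Finset.sum_filter]
          exact hind S hSt v
      _ = ((θ:ℝ)/M)^S.card := by
          rw [Finset.sum_const, hVcard, nsmul_eq_mul, div_pow, div_pow]
          push_cast
          field_simp
          rw [one_pow, mul_one]
  -- moments
  have hmom : ∀ k, k ≤ t → ∑ ω, μ ω * ((N ω).choose k : ℝ)
      = (b.choose k : ℝ) * ((θ:ℝ)/M)^k := by
    intro k hk
    have hp : ∀ ω, ((N ω).choose k : ℝ) =
        ∑ S ∈ powersetCard k (univ : Finset (Fin b)),
          (if ∀ i ∈ S, ((Xv i ω:ℕ) < θ) then (1:ℝ) else 0) := by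
      intro ω
      have h2 : (powersetCard k (univ : Finset (Fin b))).filter
          (fun S => ∀ i ∈ S, ((Xv i ω:ℕ) < θ))
          = powersetCard k (univ.filter (fun i => ((Xv i ω:ℕ) < θ))) := by
        ext S
        simp only [mem_filter, mem_powersetCard]
        constructor
        · rintro ⟨⟨-, hc⟩, hall⟩
          exact ⟨fun i hi => mem_filter.mpr ⟨mem_univ i, hall i hi⟩, hc⟩
        · rintro ⟨hsub, hc⟩
          exact ⟨⟨subset_univ S, hc⟩, fun i hi => (mem_filter.mp (hsub hi)).2⟩
      rw [← Finset.sum_filter, Finset.sum_const, nsmul_eq_mul, mul_one, h2,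
        card_powersetCard]
    calc ∑ ω, μ ω * ((N ω).choose k : ℝ)
        = ∑ ω, ∑ S ∈ powersetCard k (univ : Finset (Fin b)),
            (if ∀ i ∈ S, ((Xv i ω:ℕ) < θ) then μ ω else 0) := by
          refine Finset.sum_congr rfl fun ω _ => ?_
          rw [hp ω, Finset.mul_sum]
          exact Finset.sum_congr rfl fun S _ => by split <;> simp
      _ = ∑ S ∈ powersetCard k (univ : Finset (Fin b)),
            ∑ ω, (if ∀ i ∈ S, ((Xv i ω:ℕ) < θ) then μ ω else 0) := Finset.sum_comm
      _ = ∑ S ∈ powersetCard k (univ : Finset (Fin b)), ((θ:ℝ)/M)^k := by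
          refine Finset.sum_congr rfl fun S hSm => ?_
          have hc : S.card = k := (mem_powersetCard.mp hSm).2
          rw [hS S (hc ▸ hk), hc]
      _ = (b.choose k : ℝ) * ((θ:ℝ)/M)^k := by
          rw [Finset.sum_const, card_powersetCard, card_univ, Fintype.card_fin,
            nsmul_eq_mul]
  -- assemble
  choose e he0 he1 he2 using fun ω => pointwise (N ω) t
  refine ⟨∑ ω, μ ω * e ω, Finset.sum_nonneg fun ω _ => mul_nonneg (hμ0 ω) (he0 ω), ?_, ?_⟩
  · calc ∑ ω, μ ω * e ω ≤ ∑ ω, μ ω * ((N ω).choose t : ℝ) :=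
        Finset.sum_le_sum fun ω _ => mul_le_mul_of_nonneg_left (he1 ω) (hμ0 ω)
      _ = (b.choose t : ℝ) * ((θ:ℝ)/M)^t := hmom t le_rfl
  · have hev : ∀ ω, ((∀ i, θ ≤ (Xv i ω : ℕ)) ↔ N ω = 0) := by
      intro ω
      simp only [hN, Finset.card_eq_zero, Finset.filter_eq_empty_iff, mem_univ, not_lt,
        true_implies, forall_const]
    calc ∑ ω ∈ univ.filter (fun ω => ∀ i, θ ≤ (Xv i ω : ℕ)), μ ω
        = ∑ ω, μ ω * (if N ω = 0 then (1:ℝ) else 0) := by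
          rw [Finset.sum_filter]
          refine Finset.sum_congr rfl fun ω _ => ?_
          by_cases h : N ω = 0
          · rw [if_pos h, if_pos ((hev ω).mpr h), mul_one]
          · rw [if_neg h, if_neg (fun hh => h ((hev ω).mp hh)), mul_zero]
      _ = ∑ ω, μ ω * ((∑ k ∈ Finset.range t, (-1:ℝ)^k * ((N ω).choose k)) + (-1)^t * e ω) := by
          refine Finset.sum_congr rfl fun ω _ => ?_
          congr 1
          have := he2 ω
          linarith [this]
      _ = (∑ k ∈ Finset.range t, (-1:ℝ)^k * (b.choose k) * ((θ:ℝ)/M)^k)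
            + (-1)^t * ∑ ω, μ ω * e ω := by
          simp only [mul_add, Finset.sum_add_distrib, Finset.mul_sum]
          congr 1
          · rw [Finset.sum_comm]
            refine Finset.sum_congr rfl fun k hk => ?_
            have : ∑ ω, μ ω * ((-1:ℝ)^k * ((N ω).choose k))
                = (-1:ℝ)^k * ∑ ω, μ ω * ((N ω).choose k) := by
              rw [Finset.mul_sum]
              exact Finset.sum_congr rfl fun ω _ => by ring
            rw [this, hmom k (le_of_lt (Finset.mem_range.mp hk))]
            ring
          · exact Finset.sum_congr rfl fun ω _ => by ring


/-- Inclusion-exclusion truncation bound: for `t`-wise independent variables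
`X₁,…,X_b` uniform on `[M]` (values of `X_i` are `Fin M`, interpreted as `1,…,M`
via `v ↦ v+1`), `|Pr[min_i X_i > θ] - (1-θ/M)^b| ≤ (bθ/M)^t / t!`. -/
theorem stmt2 {Ω : Type*} [Fintype Ω] (μ : Ω → ℝ) (hμ0 : ∀ ω, 0 ≤ μ ω)
    (hμ1 : ∑ ω, μ ω = 1) (b t M : ℕ) (hM : 1 ≤ M) (htb : t ≤ b)
    (Xv : Fin b → Ω → Fin M)
    (hind : ∀ S : Finset (Fin b), S.card ≤ t → ∀ v : Fin b → Fin M,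
      ∑ ω ∈ univ.filter (fun ω => ∀ i ∈ S, Xv i ω = v i), μ ω = (1 / (M : ℝ)) ^ S.card)
    (θ : ℕ) (hθ1 : 1 ≤ θ) (hθM : θ ≤ M) :
    |(∑ ω ∈ univ.filter (fun ω => ∀ i, θ ≤ (Xv i ω : ℕ)), μ ω) -
      (1 - (θ : ℝ) / M) ^ b| ≤ ((b : ℝ) * θ / M) ^ t / (Nat.factorial t : ℝ) := by
  have hMne : (M:ℝ) ≠ 0 := Nat.cast_ne_zero.mpr (by omega)
  obtain ⟨c1, hc10, hc1B, hc1⟩ := key μ hμ0 b t M hM Xv hind θ hθM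
  -- second space: product measure
  set μ' : (Fin b → Fin M) → ℝ := fun _ => (1/(M:ℝ))^b with hμ'def
  have hμ'0 : ∀ ω, 0 ≤ μ' ω := fun ω => by positivity
  have hind' : ∀ S : Finset (Fin b), S.card ≤ t → ∀ v : Fin b → Fin M,
      ∑ ω ∈ univ.filter (fun ω : Fin b → Fin M => ∀ i ∈ S, (fun j w => w j : Fin b → (Fin b → Fin M) → Fin M) i ω = v i), μ' ω
        = (1/(M:ℝ))^S.card := by
    intro S hSt v
    have hF : univ.filter (fun ω : Fin b → Fin M => ∀ i ∈ S, ω i = v i)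
        = Fintype.piFinset (fun i => if i ∈ S then ({v i} : Finset (Fin M)) else univ) := by
      ext ω
      simp only [mem_filter, mem_univ, true_and, Fintype.mem_piFinset]
      constructor
      · intro h i
        by_cases hi : i ∈ S <;> simp [hi]
        exact h i hi
      · intro h i hi
        have := h i
        rwa [if_pos hi, mem_singleton] at this
    have hcard : (Fintype.piFinset (fun i : Fin b => if i ∈ S then ({v i} : Finset (Fin M)) else univ)).card
        = M ^ (b - S.card) := by
      rw [Fintype.card_piFinset]
      have h1 : ∀ i : Fin b, ((if i ∈ S then ({v i} : Finset (Fin M)) else univ).card)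
          = if i ∈ Sᶜ then M else 1 := by
        intro i
        by_cases hi : i ∈ S <;> simp [hi, card_univ]
      rw [Finset.prod_congr rfl (fun i _ => h1 i), Finset.prod_ite_mem, univ_inter,
        Finset.prod_const, card_compl, Fintype.card_fin]
    simp only []
    rw [hF, Finset.sum_const, hcard, nsmul_eq_mul]
    push_cast
    exact pow_helper (M:ℝ) hMne S.card b (le_trans hSt htb)
  obtain ⟨c2, hc20, hc2B, hc2⟩ := key μ' hμ'0 b t M hM (fun j w => w j) hind' θ hθM
  have hPr' : ∑ ω ∈ univ.filter (fun ω : Fin b → Fin M => ∀ i, θ ≤ (((fun j w => w j : Fin b → (Fin b → Fin M) → Fin M) i ω : Fin M) : ℕ)), μ' ω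
      = (1 - (θ:ℝ)/M)^b := by
    have hF : univ.filter (fun ω : Fin b → Fin M => ∀ i, θ ≤ ((ω i : Fin M) : ℕ))
        = Fintype.piFinset (fun _ => univ.filter (fun x : Fin M => θ ≤ (x:ℕ))) := by
      ext ω; simp [Fintype.mem_piFinset]
    have hcard1 : (univ.filter (fun x : Fin M => θ ≤ (x:ℕ))).card = M - θ := by
      have h1 : univ.filter (fun x : Fin M => θ ≤ (x:ℕ))
          = (univ.filter (fun x : Fin M => (x:ℕ) < θ))ᶜ := by
        ext x; simp [not_lt]
      rw [h1, card_compl, card_filter_lt M θ hθM, Fintype.card_fin]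
    simp only []
    rw [hF, Finset.sum_const, Fintype.card_piFinset]
    simp only [hcard1, Finset.prod_const, card_univ, Fintype.card_fin]
    rw [nsmul_eq_mul]
    push_cast [Nat.cast_sub hθM]
    rw [← mul_pow]
    congr 1
    field_simp
  rw [hPr'] at hc2
  have hdiff : (∑ ω ∈ univ.filter (fun ω => ∀ i, θ ≤ (Xv i ω : ℕ)), μ ω) -
      (1 - (θ:ℝ)/M)^b = (-1:ℝ)^t * (c1 - c2) := by
    rw [hc1, hc2]; ring
  rw [hdiff, abs_mul, abs_pow, abs_neg, abs_one, one_pow, one_mul]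
  have hB : |c1 - c2| ≤ (b.choose t : ℝ) * ((θ:ℝ)/M)^t :=
    abs_sub_le_iff.mpr ⟨by linarith, by linarith⟩
  refine le_trans hB ?_
  have h1 : ((b.choose t : ℝ)) ≤ (b:ℝ)^t / (t.factorial : ℝ) := Nat.choose_le_pow_div t b
  have hp0 : (0:ℝ) ≤ ((θ:ℝ)/M)^t := by positivity
  calc (b.choose t : ℝ) * ((θ:ℝ)/M)^t ≤ ((b:ℝ)^t / (t.factorial : ℝ)) * ((θ:ℝ)/M)^t :=
        mul_le_mul_of_nonneg_right h1 hp0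
    _ = ((b : ℝ) * θ / M) ^ t / (Nat.factorial t : ℝ) := by
        rw [mul_div_assoc (b:ℝ) (θ:ℝ) (M:ℝ), mul_pow]
        ring
end

section
/- Let $G : S \to [M]^N$ be a map (a PRG with seed set $S$) such that for every combinatorial rectangle $f : [M]^N \to \{0,1\}$, $|\mathbb{E}_{s \sim S}[f(G(s))] - \mathbb{E}_{h \sim U}[f(h)]| \leq \delta$, where $U$ is uniform on $[M]^N$. Fix $X \subseteq [N]$ and $y \in X$. If $\Pr_{h \sim U}[h(y) < \min_{x \in X\setminus\{y\}} h(x)] \geq \frac{1}{2N}$, then $\left| \Pr_{s \sim S}[G(s)(y) < \min_{x \in X \setminus \{y\}} G(s)(x)] - \Pr_{h \sim U}[h(y) < \min_{x \in X\setminus\{y\}} h(x)] \right| \leq 2NM\delta \cdot \Pr_{h \sim U}[h(y) < \min_{x \in X\setminus\{y\}} h(x)]$. -/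
open Finset

theorem stmt10_key {α : Type*} [Fintype α] {N M : ℕ} (X : Finset (Fin N)) (y : Fin N)
    (f : Fin M → Fin N → Finset (Fin M))
    (hf : f = fun θ i => if i = y then {θ} else if i ∈ X then Finset.Ioi θ else univ)
    (g : α → Fin N → Fin M) :
    ((univ.filter fun a => ∀ x ∈ X, x ≠ y → g a y < g a x).card)
      = ∑ θ : Fin M, (univ.filter fun a => ∀ i, g a i ∈ f θ i).card := by
  rw [Finset.card_eq_sum_card_fiberwise (f := fun a => g a y) (t := univ)
    (fun a _ => mem_univ _)]
  refine Finset.sum_congr rfl fun θ _ => ?_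
  congr 1
  rw [Finset.filter_filter]
  apply Finset.filter_congr
  intro a _
  constructor
  · rintro ⟨hcond, hval⟩ i
    by_cases hiy : i = y
    · subst hiy; simp [hf, hval]
    · by_cases hiX : i ∈ X
      · simp only [hf, if_neg hiy, if_pos hiX, Finset.mem_Ioi]
        rw [← hval]; exact hcond i hiX hiy
      · simp [hf, hiy, hiX]
  · intro hall
    have hy' := hall y
    simp only [hf, if_pos rfl, Finset.mem_singleton] at hy'
    refine ⟨fun x hx hxy => ?_, hy'⟩
    have hx' := hall x
    simp only [hf, if_neg hxy, if_pos hx, Finset.mem_Ioi] at hx'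
    rw [hy']; exact hx'

/-- A PRG `G` fooling combinatorial rectangles on `[M]^N` within additive error `δ`
yields a min-wise hash with multiplicative error `2NMδ`, assuming the fair
probability is at least `1/(2N)`. -/
theorem stmt10 {S : Type*} [Fintype S] [Nonempty S] (N M : ℕ)
    (G : S → Fin N → Fin M) (δ : ℝ)
    (hG : ∀ f : Fin N → Finset (Fin M),
      |((univ.filter fun s : S => ∀ i, G s i ∈ f i).card : ℝ) / (Fintype.card S : ℝ) -
        ((univ.filter fun h : Fin N → Fin M => ∀ i, h i ∈ f i).card : ℝ) /
          (Fintype.card (Fin N → Fin M) : ℝ)| ≤ δ)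
    (X : Finset (Fin N)) (y : Fin N) (hy : y ∈ X)
    (hfair : (1 : ℝ) / (2 * N) ≤
      ((univ.filter fun h : Fin N → Fin M => ∀ x ∈ X, x ≠ y → h y < h x).card : ℝ) /
        (Fintype.card (Fin N → Fin M) : ℝ)) :
    |((univ.filter fun s : S => ∀ x ∈ X, x ≠ y → G s y < G s x).card : ℝ) /
        (Fintype.card S : ℝ) -
      ((univ.filter fun h : Fin N → Fin M => ∀ x ∈ X, x ≠ y → h y < h x).card : ℝ) /
        (Fintype.card (Fin N → Fin M) : ℝ)| ≤
    2 * N * M * δ *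
      (((univ.filter fun h : Fin N → Fin M => ∀ x ∈ X, x ≠ y → h y < h x).card : ℝ) /
        (Fintype.card (Fin N → Fin M) : ℝ)) := by
  have hN : 0 < N := y.pos
  set p : ℝ := ((univ.filter fun h : Fin N → Fin M => ∀ x ∈ X, x ≠ y → h y < h x).card : ℝ) /
        (Fintype.card (Fin N → Fin M) : ℝ) with hp
  have hppos : 0 < p := lt_of_lt_of_le (by positivity) hfair
  have hM : 0 < M := by
    rcases Nat.eq_zero_or_pos M with hM0 | hM0
    · exfalso
      subst hM0
      have : (Fintype.card (Fin N → Fin 0) : ℝ) = 0 := by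
        simp [Fintype.card_fun, zero_pow hN.ne']
      rw [hp, this, div_zero] at hppos
      exact lt_irrefl _ hppos
    · exact hM0
  have hcardH : (0:ℝ) < (Fintype.card (Fin N → Fin M) : ℝ) := by
    have : 0 < Fintype.card (Fin N → Fin M) := by
      simp [Fintype.card_fun]
      positivity
    exact_mod_cast this
  have hcardS : (0:ℝ) < (Fintype.card S : ℝ) := by
    have : 0 < Fintype.card S := Fintype.card_pos
    exact_mod_cast this
  have hδ : 0 ≤ δ := by
    have hMN : ((M:ℝ)^N) ≠ 0 := by positivity
    have := hG (fun _ => univ)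
    simpa [Finset.filter_true_of_mem, div_self hcardS.ne', div_self hcardH.ne',
      div_self hMN] using this
  -- the rectangle for each threshold θ
  set f : Fin M → Fin N → Finset (Fin M) :=
    fun θ i => if i = y then {θ} else if i ∈ X then Finset.Ioi θ else univ with hf
  have hMδ : |((univ.filter fun s : S => ∀ x ∈ X, x ≠ y → G s y < G s x).card : ℝ) /
        (Fintype.card S : ℝ) -
      ((univ.filter fun h : Fin N → Fin M => ∀ x ∈ X, x ≠ y → h y < h x).card : ℝ) /
        (Fintype.card (Fin N → Fin M) : ℝ)| ≤ M * δ := by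
    rw [stmt10_key X y f hf G, stmt10_key X y f hf (fun h : Fin N → Fin M => h)]
    push_cast
    rw [Finset.sum_div, Finset.sum_div, ← Finset.sum_sub_distrib]
    calc |∑ θ : Fin M,
        (((univ.filter fun s : S => ∀ i, G s i ∈ f θ i).card : ℝ) / (Fintype.card S : ℝ) -
         ((univ.filter fun h : Fin N → Fin M => ∀ i, h i ∈ f θ i).card : ℝ) /
           (Fintype.card (Fin N → Fin M) : ℝ))|
        ≤ ∑ θ : Fin M, |(((univ.filter fun s : S => ∀ i, G s i ∈ f θ i).card : ℝ) /
            (Fintype.card S : ℝ) -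
         ((univ.filter fun h : Fin N → Fin M => ∀ i, h i ∈ f θ i).card : ℝ) /
           (Fintype.card (Fin N → Fin M) : ℝ))| := Finset.abs_sum_le_sum_abs _ _
      _ ≤ ∑ _θ : Fin M, δ := Finset.sum_le_sum fun θ _ => hG (f θ)
      _ = M * δ := by simp [mul_comm]
  refine hMδ.trans ?_
  have h1 : (M:ℝ) * δ = 2 * N * M * δ * (1 / (2 * N)) := by
    field_simp
  rw [h1]
  exact mul_le_mul_of_nonneg_left hfair (by positivity)
end
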